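/- Let G = (V, E) be a finite simple graph with boundary δΩ ⊆ V, and let {u, v} ∈ E be an edge with both endpoints in the interior, i.e. u, v ∈ V \ δΩ. Let H = (V, E \ {{u, v}}) be the graph obtained from G by removing the edge {u, v}. Then λ_k(H, δΩ) ≤ λ_k(G, δΩ) for every k = 1, 2, …, |δΩ|. -/

import Mathlib

open Finset

variable {V : Type*}

/-- The Dirichlet energy `∑_{{x,y} ∈ E} (f(x) - f(y))²` of a function on the vertices. -/
noncomputable def graphEnergy [Fintype V] (G : SimpleGraph V) (f : V → ℝ) : ℝ :=
  ∑ e ∈ G.edgeSet.toFinite.toFinset,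
    Sym2.lift ⟨fun x y => (f x - f y) ^ 2, fun _ _ => by ring⟩ e

/-- The first non-trivial Steklov eigenvalue `λ₂(G, δΩ)`. -/
noncomputable def steklovLambda2 [Fintype V] (G : SimpleGraph V) (B : Finset V) : ℝ :=
  sInf {r | ∃ f : V → ℝ, ∑ x ∈ B, f x = 0 ∧ (∃ x ∈ B, f x ≠ 0) ∧
    r = graphEnergy G f / ∑ x ∈ B, f x ^ 2}

/-- The `k`-th Steklov eigenvalue `λ_k(G, δΩ)`: the min over `k`-dimensional subspaces `W`
of `ℝ^V` of the max of the Rayleigh quotient over `f ∈ W` not vanishing identically on the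
boundary. -/
noncomputable def steklovLambdaK [Fintype V] (G : SimpleGraph V) (B : Finset V) (k : ℕ) : ℝ :=
  sInf {r | ∃ W : Submodule ℝ (V → ℝ), Module.finrank ℝ W = k ∧
    IsGreatest {s | ∃ f ∈ W, (∃ x ∈ B, f x ≠ 0) ∧
      s = graphEnergy G f / ∑ x ∈ B, f x ^ 2} r}

section Aux

variable [Fintype V]

/-- The cross term of the Dirichlet energy. -/
noncomputable def crossEnergy (G : SimpleGraph V) (f g : V → ℝ) : ℝ :=
  ∑ e ∈ G.edgeSet.toFinite.toFinset,
    Sym2.lift ⟨fun x y => (f x - f y) * (g x - g y), fun _ _ => by ring⟩ e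

lemma graphEnergy_nonneg (G : SimpleGraph V) (f : V → ℝ) : 0 ≤ graphEnergy G f := by
  refine Finset.sum_nonneg fun e _ => ?_
  induction e using Sym2.ind with
  | _ x y => simp only [Sym2.lift_mk]; positivity

lemma graphEnergy_mono {H G : SimpleGraph V} (hsub : H ≤ G) (f : V → ℝ) :
    graphEnergy H f ≤ graphEnergy G f := by
  refine Finset.sum_le_sum_of_subset_of_nonneg ?_ fun e _ _ => ?_
  · exact Set.Finite.toFinset_subset_toFinset.mpr (SimpleGraph.edgeSet_mono hsub)
  · induction e using Sym2.ind with
    | _ x y => simp only [Sym2.lift_mk]; positivity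

lemma graphEnergy_smul (G : SimpleGraph V) (c : ℝ) (f : V → ℝ) :
    graphEnergy G (c • f) = c ^ 2 * graphEnergy G f := by
  unfold graphEnergy
  rw [Finset.mul_sum]
  refine Finset.sum_congr rfl fun e _ => ?_
  induction e using Sym2.ind with
  | _ x y => simp only [Sym2.lift_mk, Pi.smul_apply, smul_eq_mul]; ring

lemma graphEnergy_add_smul (G : SimpleGraph V) (f g : V → ℝ) (t : ℝ) :
    graphEnergy G (f + t • g)
      = graphEnergy G f + 2 * t * crossEnergy G f g + t ^ 2 * graphEnergy G g := by
  unfold graphEnergy crossEnergy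
  rw [Finset.mul_sum, Finset.mul_sum, ← Finset.sum_add_distrib, ← Finset.sum_add_distrib]
  refine Finset.sum_congr rfl fun e _ => ?_
  induction e using Sym2.ind with
  | _ x y =>
    simp only [Sym2.lift_mk, Pi.add_apply, Pi.smul_apply, smul_eq_mul]; ring

lemma quad_bound {a b c C : ℝ} (hc : 0 ≤ c) (h : ∀ t : ℝ, a + 2 * t * b + t ^ 2 * c ≤ C) :
    c = 0 := by
  by_contra hne
  have hcpos : 0 < c := lt_of_le_of_ne hc (Ne.symm hne)
  have h2 : ∀ t : ℝ, c * t ^ 2 ≤ C - a := by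
    intro t
    have h1 := h t
    have h1' := h (-t)
    nlinarith
  set t : ℝ := max 1 ((C - a) / c + 1) with ht
  have ht1 : (1 : ℝ) ≤ t := le_max_left _ _
  have ht2 : (C - a) / c + 1 ≤ t := le_max_right _ _
  have hct2 := h2 t
  have htt : t ≤ t ^ 2 := by nlinarith
  have hct : c * t ≤ C - a := by nlinarith [mul_le_mul_of_nonneg_left htt hcpos.le]
  have htle : t ≤ (C - a) / c := (le_div_iff₀ hcpos).mpr (by linarith [mul_comm c t])
  linarith

lemma graphEnergy_add_of_zero {H G : SimpleGraph V} (hsub : H ≤ G) (f g : V → ℝ)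
    (hg : graphEnergy G g = 0) : graphEnergy H (f + g) = graphEnergy H f := by
  have hterm : ∀ e ∈ G.edgeSet.toFinite.toFinset,
      Sym2.lift ⟨fun x y => (g x - g y) ^ 2, fun _ _ => by ring⟩ e = 0 := by
    refine (Finset.sum_eq_zero_iff_of_nonneg fun e _ => ?_).mp hg
    induction e using Sym2.ind with
    | _ x y => simp only [Sym2.lift_mk]; positivity
  have key : ∀ e : Sym2 V,
      Sym2.lift ⟨fun x y => (g x - g y) ^ 2, fun _ _ => by ring⟩ e = 0 →
      Sym2.lift ⟨fun x y => ((f + g) x - (f + g) y) ^ 2, fun _ _ => by ring⟩ e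
        = Sym2.lift ⟨fun x y => (f x - f y) ^ 2, fun _ _ => by ring⟩ e := by
    intro e
    induction e using Sym2.ind with
    | _ x y =>
      intro h0
      simp only [Sym2.lift_mk, Pi.add_apply] at *
      nlinarith [sq_nonneg (g x - g y)]
  refine Finset.sum_congr rfl fun e he => ?_
  have heG : e ∈ G.edgeSet.toFinite.toFinset :=
    Set.Finite.toFinset_subset_toFinset.mpr (SimpleGraph.edgeSet_mono hsub) he
  exact key e (hterm e heG)

lemma sumsq_pos {B : Finset V} {f : V → ℝ} (h : ∃ x ∈ B, f x ≠ 0) :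
    0 < ∑ x ∈ B, f x ^ 2 := by
  obtain ⟨x, hx, hfx⟩ := h
  exact Finset.sum_pos' (fun i _ => sq_nonneg _) ⟨x, hx, by positivity⟩

/-- Attainment of the maximal Rayleigh quotient on a subspace, assuming the energy is
invariant under adding boundary-vanishing elements of the subspace. -/
lemma attain (G' : SimpleGraph V) (B : Finset V) (W : Submodule ℝ (V → ℝ))
    (Hinv : ∀ f g : V → ℝ, f ∈ W → g ∈ W → (∀ x ∈ B, g x = 0) →
      graphEnergy G' (f + g) = graphEnergy G' f)
    (Hne : ∃ f ∈ W, ∃ x ∈ B, f x ≠ 0) :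
    ∃ r, IsGreatest {s | ∃ f ∈ W, (∃ x ∈ B, f x ≠ 0) ∧
      s = graphEnergy G' f / ∑ x ∈ B, f x ^ 2} r := by
  classical
  -- kernel of restriction-to-boundary inside W
  let K : Submodule ℝ ↥W :=
    { carrier := {g : ↥W | ∀ x ∈ B, (g : V → ℝ) x = 0}
      add_mem' := by intro a b ha hb x hx; simp [ha x hx, hb x hx]
      zero_mem' := by intro x hx; simp
      smul_mem' := by intro c a ha x hx; simp [ha x hx] }
  obtain ⟨W₀', hcompl⟩ := Submodule.exists_isCompl K
  set W₀ : Submodule ℝ (V → ℝ) := W₀'.map W.subtype with hW₀def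
  have hW₀W : W₀ ≤ W := Submodule.map_subtype_le _ _
  have hdecomp : ∀ f ∈ W, ∃ g p : V → ℝ, g ∈ W ∧ (∀ x ∈ B, g x = 0) ∧ p ∈ W₀ ∧ f = g + p := by
    intro f hf
    have hmem : (⟨f, hf⟩ : ↥W) ∈ K ⊔ W₀' := by rw [hcompl.sup_eq_top]; trivial
    obtain ⟨y, hy, z, hz, hsum⟩ := Submodule.mem_sup.mp hmem
    refine ⟨(y : V → ℝ), (z : V → ℝ), y.2, hy, ⟨z, hz, rfl⟩, ?_⟩
    have := congrArg (Subtype.val) hsum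
    simpa using this.symm
  have hW₀nz : ∀ p, p ∈ W₀ → p ≠ 0 → ∃ x ∈ B, p x ≠ 0 := by
    intro p hp hp0
    by_contra h
    push_neg at h
    obtain ⟨p', hp', hpe⟩ := hp
    have hK : p' ∈ K := by
      intro x hx
      have hpx : (p' : V → ℝ) x = p x := by rw [← hpe]; rfl
      rw [hpx]; exact h x hx
    have hmem : p' ∈ K ⊓ W₀' := ⟨hK, hp'⟩
    rw [hcompl.inf_eq_bot] at hmem
    have hp'0 : p' = 0 := (Submodule.mem_bot ℝ).mp hmem
    apply hp0
    rw [← hpe, hp'0]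
    simp
  -- the compact set of unit vectors in W₀
  set M : Set (V → ℝ) := {p | p ∈ W₀ ∧ ‖p‖ = 1} with hMdef
  have hMnz : ∀ p ∈ M, ∃ x ∈ B, p x ≠ 0 := by
    intro p hp
    refine hW₀nz p hp.1 ?_
    intro h0
    rw [h0] at hp
    simpa using hp.2
  have hMne : M.Nonempty := by
    obtain ⟨f, hf, hfB⟩ := Hne
    obtain ⟨g, p, hgW, hgB, hpW₀, hfeq⟩ := hdecomp f hf
    have hp0 : p ≠ 0 := by
      rintro rfl
      obtain ⟨x, hx, hfx⟩ := hfB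
      apply hfx
      rw [hfeq]; simp [hgB x hx]
    have hnp : ‖p‖ ≠ 0 := norm_ne_zero_iff.mpr hp0
    refine ⟨‖p‖⁻¹ • p, W₀.smul_mem _ hpW₀, ?_⟩
    rw [norm_smul]
    simp [abs_of_nonneg (inv_nonneg.mpr (norm_nonneg p)), inv_mul_cancel₀ hnp]
  haveI : ProperSpace (V → ℝ) := FiniteDimensional.proper ℝ (V → ℝ)
  have hMc : IsCompact M := by
    have h1 : M = (W₀ : Set (V → ℝ)) ∩ Metric.sphere 0 1 := by
      ext p
      simp [hMdef, mem_sphere_zero_iff_norm]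
    rw [h1]
    exact (isCompact_sphere 0 1).inter_left (Submodule.closed_of_finiteDimensional W₀)
  set φ : (V → ℝ) → ℝ := fun p => graphEnergy G' p / ∑ x ∈ B, p x ^ 2 with hφdef
  have hEcont : Continuous fun p : V → ℝ => graphEnergy G' p := by
    unfold graphEnergy
    refine continuous_finset_sum _ fun e _ => ?_
    induction e using Sym2.ind with
    | _ x y =>
      simp only [Sym2.lift_mk]
      exact ((continuous_apply x).sub (continuous_apply y)).pow 2
  have hQcont : Continuous fun p : V → ℝ => ∑ x ∈ B, p x ^ 2 :=
    continuous_finset_sum _ fun x _ => (continuous_apply x).pow 2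
  have hφcont : ContinuousOn φ M :=
    ContinuousOn.div hEcont.continuousOn hQcont.continuousOn
      (fun p hp => ne_of_gt (sumsq_pos (hMnz p hp)))
  obtain ⟨p₀, hp₀M, hmax⟩ := hMc.exists_isMaxOn hMne hφcont
  refine ⟨φ p₀, ⟨p₀, hW₀W hp₀M.1, hMnz p₀ hp₀M, rfl⟩, ?_⟩
  rintro s ⟨f, hfW, hfB, rfl⟩
  obtain ⟨g, p, hgW, hgB, hpW₀, hfeq⟩ := hdecomp f hfW
  have hp0 : p ≠ 0 := by
    rintro rfl
    obtain ⟨x, hx, hfx⟩ := hfB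
    apply hfx
    rw [hfeq]; simp [hgB x hx]
  -- energy and boundary sum only depend on p
  have hEf : graphEnergy G' f = graphEnergy G' p := by
    rw [hfeq, add_comm]
    exact Hinv p g (hW₀W hpW₀) hgW hgB
  have hQf : ∑ x ∈ B, f x ^ 2 = ∑ x ∈ B, p x ^ 2 := by
    refine Finset.sum_congr rfl fun x hx => ?_
    rw [hfeq]
    simp [hgB x hx]
  have hnp : ‖p‖ ≠ 0 := norm_ne_zero_iff.mpr hp0
  have hpB : ∃ x ∈ B, p x ≠ 0 := hW₀nz p hpW₀ hp0
  have hQp : (0 : ℝ) < ∑ x ∈ B, p x ^ 2 := sumsq_pos hpB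
  set q : V → ℝ := ‖p‖⁻¹ • p with hqdef
  have hqM : q ∈ M := by
    refine ⟨W₀.smul_mem _ hpW₀, ?_⟩
    rw [hqdef, norm_smul]
    simp [abs_of_nonneg (inv_nonneg.mpr (norm_nonneg p)), inv_mul_cancel₀ hnp]
  have hφq : φ q = graphEnergy G' p / ∑ x ∈ B, p x ^ 2 := by
    have hc2 : (‖p‖⁻¹) ^ 2 ≠ 0 := pow_ne_zero _ (inv_ne_zero hnp)
    have hEq : graphEnergy G' q = (‖p‖⁻¹) ^ 2 * graphEnergy G' p := graphEnergy_smul _ _ _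
    have hQq : ∑ x ∈ B, q x ^ 2 = (‖p‖⁻¹) ^ 2 * ∑ x ∈ B, p x ^ 2 := by
      rw [Finset.mul_sum]
      refine Finset.sum_congr rfl fun x _ => ?_
      simp [hqdef]; ring
    rw [hφdef]
    simp only
    rw [hEq, hQq, mul_div_mul_left _ _ hc2]
  calc graphEnergy G' f / ∑ x ∈ B, f x ^ 2
      = graphEnergy G' p / ∑ x ∈ B, p x ^ 2 := by rw [hEf, hQf]
    _ = φ q := hφq.symm
    _ ≤ φ p₀ := hmax hqM

/-- The set defining `steklovLambdaK` is nonempty for `1 ≤ k ≤ |B|`. -/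
lemma steklov_set_nonempty (G' : SimpleGraph V) (B : Finset V) (k : ℕ)
    (hk1 : 1 ≤ k) (hk2 : k ≤ B.card) :
    ∃ r, r ∈ {r | ∃ W : Submodule ℝ (V → ℝ), Module.finrank ℝ W = k ∧
      IsGreatest {s | ∃ f ∈ W, (∃ x ∈ B, f x ≠ 0) ∧
        s = graphEnergy G' f / ∑ x ∈ B, f x ^ 2} r} := by
  classical
  obtain ⟨T, hTB, hTcard⟩ := Finset.exists_subset_card_eq hk2
  set W : Submodule ℝ (V → ℝ) :=
    Submodule.span ℝ (Set.range fun b : ↥T => (Pi.single (b : V) (1 : ℝ) : V → ℝ)) with hWdef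
  have hli : LinearIndependent ℝ (fun b : ↥T => (Pi.single (b : V) (1 : ℝ) : V → ℝ)) := by
    have h := (Pi.basisFun ℝ V).linearIndependent
    have h2 := h.comp (fun b : ↥T => (b : V)) Subtype.val_injective
    simpa [Function.comp_def, Pi.basisFun_apply] using h2
  have hrank : Module.finrank ℝ W = k := by
    rw [hWdef, finrank_span_eq_card hli, Fintype.card_coe, hTcard]
  -- every element of W is supported on T
  have hsupp : ∀ h ∈ W, ∀ x, x ∉ T → h x = 0 := by
    intro h hh x hx
    let P : Submodule ℝ (V → ℝ) :=
      { carrier := {h : V → ℝ | ∀ x, x ∉ T → h x = 0}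
        add_mem' := by intro a b ha hb y hy; simp [ha y hy, hb y hy]
        zero_mem' := by intro y hy; simp
        smul_mem' := by intro c a ha y hy; simp [ha y hy] }
    have hWP : W ≤ P := by
      rw [hWdef, Submodule.span_le]
      rintro _ ⟨b, rfl⟩ y hy
      refine Pi.single_eq_of_ne (fun hyb : y = (b : V) => hy ?_) 1
      rw [hyb]; exact b.2
    exact hWP hh x hx
  have hTne : T.Nonempty := Finset.card_pos.mp (by omega)
  obtain ⟨b₀, hb₀⟩ := hTne
  have Hne : ∃ f ∈ W, ∃ x ∈ B, f x ≠ 0 := by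
    refine ⟨(Pi.single b₀ 1 : V → ℝ), Submodule.subset_span ⟨⟨b₀, hb₀⟩, rfl⟩, b₀, hTB hb₀, ?_⟩
    simp
  have Hinv : ∀ f g : V → ℝ, f ∈ W → g ∈ W → (∀ x ∈ B, g x = 0) →
      graphEnergy G' (f + g) = graphEnergy G' f := by
    intro f g hf hg hgB
    have hg0 : g = 0 := by
      funext x
      by_cases hx : x ∈ T
      · exact hgB x (hTB hx)
      · exact hsupp g hg x hx
    rw [hg0, add_zero]
  obtain ⟨r, hr⟩ := attain G' B W Hinv Hne
  exact ⟨r, W, hrank, hr⟩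

end Aux

/-- Removing an interior edge does not increase any Steklov eigenvalue:
`λ_k(H, δΩ) ≤ λ_k(G, δΩ)` for `H = G - {u,v}` with `u, v ∉ δΩ`. -/
theorem steklov_monotone_edge_removal [Fintype V] (G : SimpleGraph V)
    (B : Finset V) (hB : B.Nonempty)
    (u v : V) (huv : G.Adj u v) (hu : u ∉ B) (hv : v ∉ B) :
    ∀ k : ℕ, 1 ≤ k → k ≤ B.card →
      steklovLambdaK (G.deleteEdges {s(u, v)}) B k ≤ steklovLambdaK G B k := by
  intro k hk1 hk2
  set H : SimpleGraph V := G.deleteEdges {s(u, v)} with hHdef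
  have hHG : H ≤ G := SimpleGraph.deleteEdges_le _
  set SH : Set ℝ := {r | ∃ W : Submodule ℝ (V → ℝ), Module.finrank ℝ W = k ∧
    IsGreatest {s | ∃ f ∈ W, (∃ x ∈ B, f x ≠ 0) ∧
      s = graphEnergy H f / ∑ x ∈ B, f x ^ 2} r} with hSHdef
  set SG : Set ℝ := {r | ∃ W : Submodule ℝ (V → ℝ), Module.finrank ℝ W = k ∧
    IsGreatest {s | ∃ f ∈ W, (∃ x ∈ B, f x ≠ 0) ∧
      s = graphEnergy G f / ∑ x ∈ B, f x ^ 2} r} with hSGdef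
  have hbdd : BddBelow SH := by
    refine ⟨0, fun r hr => ?_⟩
    obtain ⟨W, _, hgr⟩ := hr
    obtain ⟨f, _, hfB, rfl⟩ := hgr.1
    exact div_nonneg (graphEnergy_nonneg _ _) (le_of_lt (sumsq_pos hfB))
  have hSGne : SG.Nonempty := steklov_set_nonempty G B k hk1 hk2
  show sInf SH ≤ sInf SG
  refine le_csInf hSGne fun r hr => ?_
  obtain ⟨W, hWrank, hgr⟩ := hr
  -- key invariance: any boundary-vanishing element of W has zero G-energy
  obtain ⟨f₁, hf₁W, hf₁B, hreq⟩ := hgr.1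
  have hQ₁ : (0 : ℝ) < ∑ x ∈ B, f₁ x ^ 2 := sumsq_pos hf₁B
  have Hzero : ∀ g : V → ℝ, g ∈ W → (∀ x ∈ B, g x = 0) → graphEnergy G g = 0 := by
    intro g hgW hgB
    have hbound : ∀ t : ℝ, graphEnergy G f₁ + 2 * t * crossEnergy G f₁ g
        + t ^ 2 * graphEnergy G g ≤ r * ∑ x ∈ B, f₁ x ^ 2 := by
      intro t
      rw [← graphEnergy_add_smul]
      have hmem : f₁ + t • g ∈ W := W.add_mem hf₁W (W.smul_mem t hgW)
      have hQeq : ∑ x ∈ B, (f₁ + t • g) x ^ 2 = ∑ x ∈ B, f₁ x ^ 2 := by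
        refine Finset.sum_congr rfl fun x hx => ?_
        simp [hgB x hx]
      have hBne : ∃ x ∈ B, (f₁ + t • g) x ≠ 0 := by
        obtain ⟨x, hx, hfx⟩ := hf₁B
        exact ⟨x, hx, by simp [hgB x hx, hfx]⟩
      have := hgr.2 ⟨f₁ + t • g, hmem, hBne, rfl⟩
      rw [hQeq] at this
      calc graphEnergy G (f₁ + t • g)
          = (graphEnergy G (f₁ + t • g) / ∑ x ∈ B, f₁ x ^ 2) * ∑ x ∈ B, f₁ x ^ 2 := by
            field_simp
        _ ≤ r * ∑ x ∈ B, f₁ x ^ 2 := by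
            exact mul_le_mul_of_nonneg_right this (le_of_lt hQ₁)
    exact quad_bound (graphEnergy_nonneg G g) hbound
  have Hinv : ∀ f g : V → ℝ, f ∈ W → g ∈ W → (∀ x ∈ B, g x = 0) →
      graphEnergy H (f + g) = graphEnergy H f := by
    intro f g hfW hgW hgB
    exact graphEnergy_add_of_zero hHG f g (Hzero g hgW hgB)
  obtain ⟨r', hgr'⟩ := attain H B W Hinv ⟨f₁, hf₁W, hf₁B⟩
  have hr'SH : r' ∈ SH := ⟨W, hWrank, hgr'⟩
  have hr'r : r' ≤ r := by
    obtain ⟨f₂, hf₂W, hf₂B, hr'eq⟩ := hgr'.1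
    have hQ₂ : (0 : ℝ) < ∑ x ∈ B, f₂ x ^ 2 := sumsq_pos hf₂B
    have h1 : graphEnergy H f₂ / ∑ x ∈ B, f₂ x ^ 2 ≤ graphEnergy G f₂ / ∑ x ∈ B, f₂ x ^ 2 :=
      (div_le_div_iff_of_pos_right hQ₂).mpr (graphEnergy_mono hHG f₂)
    rw [hr'eq]
    exact le_trans h1 (hgr.2 ⟨f₂, hf₂W, hf₂B, rfl⟩)
  exact le_trans (csInf_le hbdd hr'SH) hr'r
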